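/- arXiv:1105.4367 — 8 statements merged into one kernel-verified Lean document; each statement's English description precedes it below -/
import Mathlib

section
/- Let g, s, d be integers with d = g − s, d > 0, g ≥ 2s + 13, g ≥ 2 and g + s > 2. Then for all integers m, n such that 6m + dn > 0 and 6m² + 2dmn + (2g − 2)n² ≥ −2, one has dm + (2g − 2)n > 0. -/
/-!
Write `D = mH + nC` in a lattice with Gram matrix `[[a, b], [b, c]]` and put `A = D·H`,
`B = D·C`, `Δ = b² - ac`. Then `D² = mA + nB`, `Δn = bA - aB`, `Δm = bB - cA` and
`aD² = A² - Δn²`. If `A > 0` but `B ≤ 0`, the middle two identities force `n > 0 > m`, so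
`D² ≤ -A`; together with `D² ≥ -2` this leaves `A ≤ 2`, whence `Δ ≤ Δn² = A² - aD² ≤ 4 + 2a`.
So `B > 0` as soon as `Δ > 2a + 4`. For `a = 6`, `b = g - s`, `c = 2g - 2` this follows from
`2b ≥ g + 13`, since `4Δ ≥ (g + 13)² - 48(g - 1) = (g - 11)² + 96`.
-/

namespace GramLattice

variable {a b c m n : ℤ}

theorem snd_pos (ha : 0 ≤ a) (hb : 0 < b) (hΔ : 0 ≤ b ^ 2 - a * c)
    (hA : 0 < a * m + b * n) (hB : b * m + c * n ≤ 0) : 0 < n := by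
  have h : 0 < (b ^ 2 - a * c) * n := by
    linear_combination mul_pos hb hA + mul_nonpos_of_nonneg_of_nonpos ha hB
  exact pos_of_mul_pos_right h hΔ

theorem fst_neg (hb : 0 ≤ b) (hc : 0 < c) (hΔ : 0 ≤ b ^ 2 - a * c)
    (hA : 0 < a * m + b * n) (hB : b * m + c * n ≤ 0) : m < 0 := by
  have h : (b ^ 2 - a * c) * m < 0 := by
    linear_combination mul_pos hc hA + mul_nonpos_of_nonneg_of_nonpos hb hB
  exact neg_of_mul_neg_right h hΔ

theorem snd_pairing_pos (ha : 0 ≤ a) (hb : 0 < b) (hc : 0 < c)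
    (hΔ : 2 * a + 4 < b ^ 2 - a * c) (hA : 0 < a * m + b * n)
    (hQ : -2 ≤ a * m ^ 2 + 2 * b * m * n + c * n ^ 2) : 0 < b * m + c * n := by
  by_contra! hB
  have hn := snd_pos ha hb (by linarith) hA hB
  have hm := fst_neg hb.le hc (by linarith) hA hB
  have hA₂ : a * m + b * n ≤ 2 := by
    linear_combination hQ + mul_nonpos_of_nonpos_of_nonneg (by omega : m + 1 ≤ 0) hA.le
      + mul_nonpos_of_nonneg_of_nonpos hn.le hB
  have hn₂ : b ^ 2 - a * c ≤ (b ^ 2 - a * c) * n ^ 2 :=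
    le_mul_of_one_le_right (by linarith) (one_le_pow₀ (by omega))
  have hA_sq : (a * m + b * n) ^ 2 ≤ 2 ^ 2 := pow_le_pow_left₀ hA.le hA₂ 2
  have hΔn : (b ^ 2 - a * c) * n ^ 2 ≤ 2 * a + 4 := by
    linear_combination hA_sq + mul_le_mul_of_nonneg_left hQ ha
  linarith

end GramLattice

theorem discr_gt_of_two_mul_le (g d : ℤ) (hg : 0 ≤ g + 13) (h : g + 13 ≤ 2 * d) :
    16 < d ^ 2 - 6 * (2 * g - 2) := by
  nlinarith [sq_nonneg (g - 11)]

theorem stmt_1_general (g s d : ℤ) (hd : d = g - s) (hgs : g ≥ 2 * s + 13)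
    (hg : g ≥ 2) :
    ∀ m n : ℤ, 6 * m + d * n > 0 →
      6 * m ^ 2 + 2 * d * m * n + (2 * g - 2) * n ^ 2 ≥ -2 →
      d * m + (2 * g - 2) * n > 0 := by
  intro m n hA hQ
  have h2d : g + 13 ≤ 2 * d := by omega
  exact GramLattice.snd_pairing_pos (by norm_num) (by omega) (by omega)
    (discr_gt_of_two_mul_le g d (by omega) h2d) hA hQ

theorem stmt_1 (g s d : ℤ) (hd : d = g - s) (hdpos : d > 0) (hgs : g ≥ 2 * s + 13)
    (hg : g ≥ 2) (hgsum : g + s > 2) :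
    ∀ m n : ℤ, 6 * m + d * n > 0 →
      6 * m ^ 2 + 2 * d * m * n + (2 * g - 2) * n ^ 2 ≥ -2 →
      d * m + (2 * g - 2) * n > 0 :=
  stmt_1_general g s d hd hgs hg
end

section
/- Let g, s, d be integers with d = g − s, d > 0, g ≥ 0 and g ≥ 2s + 13. Let m, n be integers with 3m² + dmn + (g − 1)n² = −1, set r = 6m + dn, and assume r ≥ 1. Then one of the following holds: (i) r ≥ d − 5; (ii) s = −3, r = d − 6, m = −1 and n = 1; (iii) s = −3, 3 divides g, r = d − 6, 3m = g and n = −1; (iv) s ≥ −1, g = 4s + 16, r = d − 8, m = s + 4 and n = −1; (v) s ≥ 1, s is odd, 2g = 5(s + 5), r = d − 10, 2m = s + 5 and n = −1. -/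
/-!
Completing the square, `r² + 12 = (d² - 12(g - 1)) n²`. If `r ≤ d - 6`, the bound
`g ≤ 2d - 13` makes the discriminant too small for `n² ≥ 4`, so `n = ±1` and
`(d - r)(d + r) = 12g`. Then `r² > (d - 12)²` forces `6 ≤ d - r ≤ 11`, and parity leaves
`d - r ∈ {6, 8, 10}`, each of which pins down `s`, `m` and `n`.
-/

lemma sq_add_twelve_eq_disc_mul_sq (d g m n : ℤ)
    (h : 3 * m ^ 2 + d * m * n + (g - 1) * n ^ 2 = -1) :
    (6 * m + d * n) ^ 2 + 12 = (d ^ 2 - 12 * (g - 1)) * n ^ 2 := by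
  linear_combination 12 * h

lemma sq_eq_one_of_le_sub_six {d g n r : ℤ} (hg : g ≤ 2 * d - 13) (hr₀ : 0 ≤ r)
    (hr : r ≤ d - 6) (h : r ^ 2 + 12 = (d ^ 2 - 12 * (g - 1)) * n ^ 2) : n ^ 2 = 1 := by
  have hn₀ : n ≠ 0 := by
    rintro rfl
    nlinarith
  have hdisc : 0 < d ^ 2 - 12 * (g - 1) := by
    have : 0 < n ^ 2 := by positivity
    nlinarith
  by_contra hn₁
  have hn : 4 ≤ n ^ 2 := by
    have : 1 < |n| :=
      (Int.one_le_abs hn₀).lt_of_ne fun h ↦ hn₁ (by rw [← sq_abs, ← h, one_pow])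
    nlinarith [sq_abs n]
  have hr_sq : r ^ 2 ≤ (d - 6) ^ 2 := pow_le_pow_left₀ hr₀ hr 2
  nlinarith [sq_nonneg (d - 14)]

lemma sub_lt_twelve_of_sq_add_eq {d g r : ℤ} (hg : g ≤ 2 * d - 13) (hr : 0 ≤ r)
    (h : r ^ 2 + 12 * g = d ^ 2) : d - r < 12 := by
  have : (d - 12) ^ 2 < r ^ 2 := by nlinarith
  linarith [le_abs_self (d - 12), abs_lt_of_sq_lt_sq this hr]

lemma eq_of_sq_add_eq_of_sub_mem_Icc {g s d r : ℤ} (hd : d = g - s)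
    (h : r ^ 2 + 12 * g = d ^ 2) (h₆ : 6 ≤ d - r) (h₁₁ : d - r ≤ 11) :
    (s = -3 ∧ r = d - 6) ∨ (g = 4 * s + 16 ∧ r = d - 8) ∨
      (2 * g = 5 * (s + 5) ∧ r = d - 10) := by
  obtain ⟨k, rfl⟩ : ∃ k, r = d - k := ⟨d - r, by ring⟩
  have hk : k * (2 * d - k) = 12 * g := by linear_combination -h
  simp only [sub_sub_cancel] at h₆ h₁₁ ⊢
  interval_cases k <;> omega

theorem stmt_2_general (g s d : ℤ) (hd : d = g - s)
    (hgs : g ≥ 2 * s + 13) (m n r : ℤ)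
    (hF : 3 * m ^ 2 + d * m * n + (g - 1) * n ^ 2 = -1)
    (hr : r = 6 * m + d * n) (hr1 : r ≥ 1) :
    r ≥ d - 5 ∨
    (s = -3 ∧ r = d - 6 ∧ m = -1 ∧ n = 1) ∨
    (s = -3 ∧ (3 : ℤ) ∣ g ∧ r = d - 6 ∧ 3 * m = g ∧ n = -1) ∨
    (s ≥ -1 ∧ g = 4 * s + 16 ∧ r = d - 8 ∧ m = s + 4 ∧ n = -1) ∨
    (s ≥ 1 ∧ Odd s ∧ 2 * g = 5 * (s + 5) ∧ r = d - 10 ∧ 2 * m = s + 5 ∧ n = -1) := by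
  obtain hr₅ | hr₆ := le_or_gt (d - 5) r
  · exact Or.inl hr₅
  have hg : g ≤ 2 * d - 13 := by omega
  have hdisc : r ^ 2 + 12 = (d ^ 2 - 12 * (g - 1)) * n ^ 2 :=
    hr ▸ sq_add_twelve_eq_disc_mul_sq d g m n hF
  have hn : n ^ 2 = 1 := sq_eq_one_of_le_sub_six hg (by omega) (by omega) hdisc
  have hsq : r ^ 2 + 12 * g = d ^ 2 := by linear_combination hdisc + (d ^ 2 - 12 * (g - 1)) * hn
  have h₁₁ := sub_lt_twelve_of_sq_add_eq hg (by omega) hsq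
  rw [Int.odd_iff]
  rcases eq_of_sq_add_eq_of_sub_mem_Icc hd hsq (by omega) (by omega) with h | h | h <;>
    rcases sq_eq_one_iff.1 hn with rfl | rfl <;> omega

theorem stmt_2 (g s d : ℤ) (hd : d = g - s) (hdpos : d > 0) (hg0 : g ≥ 0)
    (hgs : g ≥ 2 * s + 13) (m n r : ℤ)
    (hF : 3 * m ^ 2 + d * m * n + (g - 1) * n ^ 2 = -1)
    (hr : r = 6 * m + d * n) (hr1 : r ≥ 1) :
    r ≥ d - 5 ∨
    (s = -3 ∧ r = d - 6 ∧ m = -1 ∧ n = 1) ∨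
    (s = -3 ∧ (3 : ℤ) ∣ g ∧ r = d - 6 ∧ 3 * m = g ∧ n = -1) ∨
    (s ≥ -1 ∧ g = 4 * s + 16 ∧ r = d - 8 ∧ m = s + 4 ∧ n = -1) ∨
    (s ≥ 1 ∧ Odd s ∧ 2 * g = 5 * (s + 5) ∧ r = d - 10 ∧ 2 * m = s + 5 ∧ n = -1) :=
  stmt_2_general g s d hd hgs m n r hF hr hr1
end

section
/- Let g, s, d be integers with d = g − s, d > 0, g ≥ 0 and g ≥ 2s + 13. If n and r are integers with n² ≥ 4, r ≥ 1, and n²(d² − 12(g − 1)) = r² + 12, then r ≥ d − 5. -/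
/-!
Since `n² ≥ 4` and `d² - 12(g - 1) > 0`, the equation gives `r² + 12 ≥ 4(d² - 12(g - 1))`.
The hypotheses on `s` amount to `g ≤ 2d - 13`, so `r² ≥ 4d² - 96d + 660`, and this exceeds
`(d - 5)²` for every `d` because `3d² - 86d + 635` has negative discriminant.
-/

theorem four_mul_le_of_sq_mul_eq {R : Type*} [CommRing R] [LinearOrder R] [IsStrictOrderedRing R]
    {n x y : R} (hn : 4 ≤ n ^ 2) (hy : 0 < y) (h : n ^ 2 * x = y) : 4 * x ≤ y := by
  have hx : 0 < x := pos_of_mul_pos_right (h ▸ hy) (sq_nonneg n)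
  calc 4 * x ≤ n ^ 2 * x := mul_le_mul_of_nonneg_right hn hx.le
    _ = y := h

theorem sq_sub_five_lt {R : Type*} [CommRing R] [LinearOrder R] [IsStrictOrderedRing R] (d : R) :
    (d - 5) ^ 2 < 4 * d ^ 2 - 96 * d + 660 := by
  nlinarith [sq_nonneg (3 * d - 43)]

theorem stmt_3_general (g s d : ℤ) (hd : d = g - s)
    (hgs : g ≥ 2 * s + 13) (n r : ℤ) (hn : n ^ 2 ≥ 4) (hr1 : r ≥ 1)
    (heq : n ^ 2 * (d ^ 2 - 12 * (g - 1)) = r ^ 2 + 12) :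
    r ≥ d - 5 := by
  have hg : g ≤ 2 * d - 13 := by omega
  have hr : 4 * (d ^ 2 - 12 * (g - 1)) ≤ r ^ 2 + 12 :=
    four_mul_le_of_sq_mul_eq hn (by positivity) heq
  by_contra! hlt
  have hsq : r ^ 2 < (d - 5) ^ 2 := pow_lt_pow_left₀ hlt (by linarith) two_ne_zero
  linarith [sq_sub_five_lt d]

theorem stmt_3 (g s d : ℤ) (hd : d = g - s) (hdpos : d > 0) (hg0 : g ≥ 0)
    (hgs : g ≥ 2 * s + 13) (n r : ℤ) (hn : n ^ 2 ≥ 4) (hr1 : r ≥ 1)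
    (heq : n ^ 2 * (d ^ 2 - 12 * (g - 1)) = r ^ 2 + 12) :
    r ≥ d - 5 :=
  stmt_3_general g s d hd hgs n r hn hr1 heq
end

section
/- Let g, s, t be integers with s ≥ −1, g ≥ 2s + 13 and t ≥ 0. If (g − s − 6)² − t² = 12s + 24, then either g = 4s + 13 and t = 3s + 5, or 2g = 5s + 22 and 2t = 3s + 2. -/
/-!
Put `d = g - s - 6 - t` and `e = g - s - 6 + t`, so `d ≤ e` and `d * e = 12 s + 24 > 0`.
The bound `g ≥ 2 s + 13` gives `d + e ≥ 2 s + 14`, whence `(d - 6) (e - 6) ≤ -24 < 0`: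
the smaller factor satisfies `0 < d < 6`. Of the five candidates, `d + e = 2 (g - s - 6)` being even
rules out `d = 1, 3, 5`, and `d = 2`, `d = 4` give the two families.
-/

theorem lt_of_sub_mul_sub_neg {α : Type*} [Ring α] [LinearOrder α] [IsStrictOrderedRing α]
    {a b c : α} (hab : a ≤ b) (h : (a - c) * (b - c) < 0) : a < c := by
  by_contra! hca
  exact (mul_nonneg (sub_nonneg.2 hca) (sub_nonneg.2 (hca.trans hab))).not_gt h

theorem pos_of_mul_pos_of_add_pos {α : Type*} [Ring α] [LinearOrder α] [IsStrictOrderedRing α]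
    {a b : α} (hab : 0 < a * b) (hsum : 0 < a + b) : 0 < a := by
  rcases pos_and_pos_or_neg_and_neg_of_mul_pos hab with ⟨ha, -⟩ | ⟨ha, hb⟩
  · exact ha
  · exact absurd hsum (add_neg ha hb).not_gt

theorem stmt_8 (g s t : ℤ) (hs : s ≥ -1) (hg : g ≥ 2 * s + 13) (ht : t ≥ 0)
    (heq : (g - s - 6) ^ 2 - t ^ 2 = 12 * s + 24) :
    (g = 4 * s + 13 ∧ t = 3 * s + 5) ∨ (2 * g = 5 * s + 22 ∧ 2 * t = 3 * s + 2) := by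
  obtain ⟨d, hd⟩ : ∃ d, d = g - s - 6 - t := ⟨_, rfl⟩
  obtain ⟨e, he⟩ : ∃ e, e = g - s - 6 + t := ⟨_, rfl⟩
  have hprod : d * e = 12 * s + 24 := by rw [hd, he]; linear_combination heq
  have hle : d ≤ e := by omega
  have hsum : 2 * s + 14 ≤ d + e := by omega
  have hd_pos : 0 < d := pos_of_mul_pos_of_add_pos (by rw [hprod]; omega) (by omega)
  have hd_lt : d < 6 :=
    lt_of_sub_mul_sub_neg hle (by linear_combination hprod + 6 * hsum)
  interval_cases d <;> omega
end

section
/- Let g, s, d be integers with d = g − s, d > 0, g ≥ 0, g ≥ 2s + 13 and s ≥ −1. Let m, n be coprime integers with 3m² + dmn + (g − 1)n² = 0 and 6m + dn > 0. Then either g = 4s + 13, s ≥ 0, and ((m, n) = (s + 3, −1) or (m, n) = (−4, 3)); or 2g = 5s + 22, s ≥ 4, s is even, and ((2m = s + 4 and n = −1) or (m, n) = (−5, 3)). -/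
/-!
Completing the square, `12 (3m² + dmn + (g - 1)n²) = (6m + dn)² - n² D` with
`D = d² - 12(g - 1)`, so `D = t²` for some `t > 0` with `6m + dn = |n| t`; coprimality
forces `n ∣ 3`. The hypotheses `s ≥ -1` and `g ≥ 2s + 13` squeeze `D` strictly between
`(d - 12)²` and `(d - 6)²`, and `t = d - k` gives `2kd - k² = 12(g - 1)`: odd `k` fail by
parity, and `k = 8, 10` give the two families. Finally `n = ±1, ±3` is read off from
`6m + dn = |n| t`, with `n = -3` excluded because it would force `3 ∣ m`.
-/

theorem IsCoprime.dvd_of_quadratic_eq_zero {R : Type*} [CommRing R] {a b c m n : R}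
    (hmn : IsCoprime m n) (h : a * m ^ 2 + b * m * n + c * n ^ 2 = 0) : n ∣ a :=
  (hmn.symm.pow_right (n := 2)).dvd_of_dvd_mul_right ⟨-(b * m + c * n), by linear_combination h⟩

theorem Int.eq_neg_three_or_neg_one_or_one_or_three_of_dvd_three {n : ℤ} (hn : n ∣ 3) :
    n = -3 ∨ n = -1 ∨ n = 1 ∨ n = 3 := by
  have := (Nat.dvd_prime Nat.prime_three).1 (Int.natAbs_dvd_natAbs.2 hn)
  omega

theorem sqrt_discr_eq_sub_eight_or_sub_ten {g s t : ℤ} (hgs : 2 * s + 13 ≤ g) (hs : -1 ≤ s)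
    (ht : 0 ≤ t) (ht2 : t ^ 2 = (g - s) ^ 2 - 12 * (g - 1)) :
    (t = g - s - 8 ∧ g = 4 * s + 13 ∧ 0 ≤ s) ∨
      (t = g - s - 10 ∧ 2 * g = 5 * s + 22 ∧ 4 ≤ s ∧ Even s) := by
  have hlt : t < g - s - 6 := lt_of_pow_lt_pow_left₀ 2 (by omega) (by nlinarith)
  have hgt : g - s - 12 < t := lt_of_pow_lt_pow_left₀ 2 ht (by nlinarith)
  obtain ⟨k, rfl⟩ : ∃ k, t = g - s - k := ⟨g - s - t, by ring⟩
  have hk : 2 * k * (g - s) = 12 * (g - 1) + k * k := by linear_combination -ht2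
  have hk₁ : 6 < k := by omega
  have hk₂ : k < 12 := by omega
  rw [even_iff_two_dvd]
  interval_cases k <;> omega

theorem stmt_10_general (g s d : ℤ) (hd : d = g - s)
    (hgs : g ≥ 2 * s + 13) (hs : s ≥ -1) (m n : ℤ) (hcop : IsCoprime m n)
    (heq : 3 * m ^ 2 + d * m * n + (g - 1) * n ^ 2 = 0)
    (hH : 6 * m + d * n > 0) :
    (g = 4 * s + 13 ∧ s ≥ 0 ∧ ((m = s + 3 ∧ n = -1) ∨ (m = -4 ∧ n = 3))) ∨
    (2 * g = 5 * s + 22 ∧ s ≥ 4 ∧ Even s ∧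
      ((2 * m = s + 4 ∧ n = -1) ∨ (m = -5 ∧ n = 3))) := by
  subst hd
  have hn3 : n ∣ 3 := hcop.dvd_of_quadratic_eq_zero heq
  have hn := Int.eq_neg_three_or_neg_one_or_one_or_three_of_dvd_three hn3
  have hn0 : n ≠ 0 := by omega
  obtain ⟨t, ht⟩ : |n| ∣ 6 * m + (g - s) * n := by
    obtain ⟨k, hk⟩ := hn3
    exact (abs_dvd _ _).2 ⟨2 * k * m + (g - s), by linear_combination 2 * m * hk⟩
  have ht0 : 0 < t := pos_of_mul_pos_right (ht ▸ hH) (abs_nonneg n)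
  have ht2 : t ^ 2 = (g - s) ^ 2 - 12 * (g - 1) := by
    have hsq : (|n| * t) ^ 2 = n ^ 2 * ((g - s) ^ 2 - 12 * (g - 1)) := by
      rw [← ht]; linear_combination 12 * heq
    rw [mul_pow, sq_abs] at hsq
    exact mul_left_cancel₀ (pow_ne_zero 2 hn0) hsq
  have h3 : ¬ (3 ∣ m ∧ 3 ∣ n) := fun ⟨hm, hn⟩ => by
    simpa [Int.isUnit_iff] using hcop.isUnit_of_dvd' hm hn
  rcases sqrt_discr_eq_sub_eight_or_sub_ten hgs hs ht0.le ht2 with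
    ⟨rfl, hg, hs⟩ | ⟨rfl, hg, hs, hev⟩
  · refine Or.inl ⟨hg, hs, ?_⟩
    rcases hn with rfl | rfl | rfl | rfl <;> simp only [abs_neg, abs_one, Nat.abs_ofNat] at ht <;> omega
  · refine Or.inr ⟨hg, hs, hev, ?_⟩
    rcases hn with rfl | rfl | rfl | rfl <;> simp only [abs_neg, abs_one, Nat.abs_ofNat] at ht <;> omega

theorem stmt_10 (g s d : ℤ) (hd : d = g - s) (hdpos : d > 0) (hg0 : g ≥ 0)
    (hgs : g ≥ 2 * s + 13) (hs : s ≥ -1) (m n : ℤ) (hcop : IsCoprime m n)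
    (heq : 3 * m ^ 2 + d * m * n + (g - 1) * n ^ 2 = 0)
    (hH : 6 * m + d * n > 0) :
    (g = 4 * s + 13 ∧ s ≥ 0 ∧ ((m = s + 3 ∧ n = -1) ∨ (m = -4 ∧ n = 3))) ∨
    (2 * g = 5 * s + 22 ∧ s ≥ 4 ∧ Even s ∧
      ((2 * m = s + 4 ∧ n = -1) ∨ (m = -5 ∧ n = 3))) :=
  stmt_10_general g s d hd hgs hs m n hcop heq hH
end

section
/- Let g, s, d be integers with s ≥ −1, g ≥ 2s + 14 and d = g − s. Suppose m, n are integers satisfying 3m² + dmn + (g − 1)n² > 0, 3 ≤ 6m + nd, 6m + nd ≤ d − 3, and md + (2n − 1)(g − 1) ≤ 0. Then −6m² + (1 − 2n)dm + (n − n²)(2g − 2) − 2 ≥ ⌊(g − 1)/2⌋. -/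
/-!
Write `x = 6m + nd` (this is `D·H`). Eliminating `m` gives
`6 f(m, n) = x (d - x) + (n² - n) (d² - 12 (g - 1)) - 12`.
Since `g ≤ 2d - 14`, the discriminant-like factor `d² - 12 (g - 1)` is positive, and
`x (d - x) ≥ 3 (d - 3)`, so for `n ∉ {0, 1}` (where `n² - n ≥ 2`) the bound is immediate.
For `n = 0` the condition `deg (D|_C) ≤ g - 1` forces `D = H`, and for `n = 1` the condition
`D² > 0` forces `D = C - H`; in both cases `f = d - 8 ≥ (g - 2) / 2`.
-/

/-- `Cliff (D|_C) = D·C - D² - 2` for `D = mH + nC`, with `H² = 6`, `H·C = d`, `C² = 2g - 2`. -/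
def cliffordValue (d g m n : ℤ) : ℤ :=
  -6 * m ^ 2 + (1 - 2 * n) * d * m + (n - n ^ 2) * (2 * g - 2) - 2

section

variable {d g m n : ℤ}

theorem six_mul_cliffordValue (d g m n : ℤ) :
    6 * cliffordValue d g m n =
      (6 * m + n * d) * (d - (6 * m + n * d)) + (n ^ 2 - n) * (d ^ 2 - 12 * (g - 1)) - 12 := by
  unfold cliffordValue
  ring

theorem two_le_sq_sub_self (h0 : n ≠ 0) (h1 : n ≠ 1) : 2 ≤ n ^ 2 - n := by
  rcases (by omega : n ≤ -1 ∨ 2 ≤ n) with h | h <;> nlinarith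

theorem eq_one_of_mul_le (h2 : 3 ≤ 6 * m) (h3 : 6 * m ≤ d - 3) (h4 : m * d ≤ g - 1)
    (hg : g ≤ 2 * d - 14) : m = 1 := by
  have hd : 0 ≤ d := by omega
  by_contra hm
  have hm2 : 2 ≤ m := by omega
  nlinarith [mul_le_mul_of_nonneg_right hm2 hd]

theorem eq_neg_one_of_sq_pos (h1 : 3 * m ^ 2 + d * m + (g - 1) > 0) (h2 : 3 ≤ 6 * m + d)
    (h3 : 6 * m ≤ -3) (hg : g ≤ 2 * d - 14) : m = -1 := by
  by_contra hm
  have hm2 : m ≤ -2 := by omega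
  -- with `k = -m ≥ 2` and `d ≥ 6k + 3`, `D² / 2 ≤ 3k² - (k - 2)(6k + 3) - 15 < 0`
  nlinarith [mul_nonneg (by omega : (0 : ℤ) ≤ -m - 2) (by omega : (0 : ℤ) ≤ d + 6 * m - 3)]

theorem cliffordValue_ge_of_two_le_sq_sub (h2 : 3 ≤ 6 * m + n * d) (h3 : 6 * m + n * d ≤ d - 3)
    (hg : g ≤ 2 * d - 14) (hn : 2 ≤ n ^ 2 - n) : g - 2 ≤ 2 * cliffordValue d g m n := by
  have hx : 3 * (d - 3) ≤ (6 * m + n * d) * (d - (6 * m + n * d)) := by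
    nlinarith [mul_nonneg (by omega : (0 : ℤ) ≤ 6 * m + n * d - 3)
      (by omega : (0 : ℤ) ≤ d - 3 - (6 * m + n * d))]
  have hΔ : 0 ≤ d ^ 2 - 12 * (g - 1) := by nlinarith [sq_nonneg (d - 12)]
  have := six_mul_cliffordValue d g m n
  nlinarith [mul_le_mul_of_nonneg_right hn hΔ, sq_nonneg (4 * d - 51)]

end

theorem stmt_11_general (g s d : ℤ) (hg : g ≥ 2 * s + 14) (hd : d = g - s)
    (m n : ℤ)
    (h1 : 3 * m ^ 2 + d * m * n + (g - 1) * n ^ 2 > 0)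
    (h2 : 3 ≤ 6 * m + n * d) (h3 : 6 * m + n * d ≤ d - 3)
    (h4 : m * d + (2 * n - 1) * (g - 1) ≤ 0) :
    -6 * m ^ 2 + (1 - 2 * n) * d * m + (n - n ^ 2) * (2 * g - 2) - 2 ≥ (g - 1) / 2 := by
  have hg' : g ≤ 2 * d - 14 := by omega
  suffices g - 2 ≤ 2 * cliffordValue d g m n by unfold cliffordValue at this; omega
  by_cases hn0 : n = 0
  · subst hn0
    obtain rfl : m = 1 := eq_one_of_mul_le (by omega) (by omega) (by linarith) hg'
    unfold cliffordValue
    omega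
  by_cases hn1 : n = 1
  · subst hn1
    obtain rfl : m = -1 := eq_neg_one_of_sq_pos (by linarith) (by omega) (by omega) hg'
    unfold cliffordValue
    omega
  exact cliffordValue_ge_of_two_le_sq_sub h2 h3 hg' (two_le_sq_sub_self hn0 hn1)

theorem stmt_11 (g s d : ℤ) (hs : s ≥ -1) (hg : g ≥ 2 * s + 14) (hd : d = g - s)
    (m n : ℤ)
    (h1 : 3 * m ^ 2 + d * m * n + (g - 1) * n ^ 2 > 0)
    (h2 : 3 ≤ 6 * m + n * d) (h3 : 6 * m + n * d ≤ d - 3)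
    (h4 : m * d + (2 * n - 1) * (g - 1) ≤ 0) :
    -6 * m ^ 2 + (1 - 2 * n) * d * m + (n - n ^ 2) * (2 * g - 2) - 2 ≥ (g - 1) / 2 :=
  stmt_11_general g s d hg hd m n h1 h2 h3 h4
end

section
/- Let g, s, d be integers with s ≥ −1, g ≥ 2s + 14 and d = g − s. Then, as real numbers, d² − 15g + 3 + d·√(d² − 12(g − 1)) ≥ 0. -/
/-! Put `c = 15g - 3 - d²`. The claim is `c ≤ d √(d² - 12(g - 1))`, and since `d ≥ 0` it suffices
that `c² ≤ d² (d² - 12(g - 1))`. The difference of the two sides is `3 (2d²(3g + 1) - 3(5g - 1)²)`,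
which is nonnegative because `g ≥ 2s + 14` forces `2d ≥ g + 14`. -/

lemma le_mul_sqrt_of_sq_le_sq_mul {c x r : ℝ} (hx : 0 ≤ x) (h : c ^ 2 ≤ x ^ 2 * r) :
    c ≤ x * Real.sqrt r :=
  calc c ≤ |c| := le_abs_self c
    _ ≤ Real.sqrt (x ^ 2 * r) := Real.abs_le_sqrt h
    _ = x * Real.sqrt r := by rw [Real.sqrt_mul (sq_nonneg x), Real.sqrt_sq hx]

lemma three_mul_sq_le_two_mul_sq_mul {g d : ℝ} (hg : 0 ≤ g) (hd : g + 14 ≤ 2 * d) :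
    3 * (5 * g - 1) ^ 2 ≤ 2 * d ^ 2 * (3 * g + 1) := by
  have hd2 : (g + 14) ^ 2 ≤ (2 * d) ^ 2 := pow_le_pow_left₀ (by linarith) hd 2
  -- `(g + 14)² (3g + 1) - 6 (5g - 1)² = 3g (g - 11)² + g² + 313g + 190`
  nlinarith [mul_le_mul_of_nonneg_right hd2 (by linarith : 0 ≤ 3 * g + 1),
    mul_nonneg hg (sq_nonneg (g - 11))]

theorem stmt_14 (g s d : ℤ) (hs : s ≥ -1) (hg : g ≥ 2 * s + 14) (hd : d = g - s) :
    (d : ℝ) ^ 2 - 15 * (g : ℝ) + 3 +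
      (d : ℝ) * Real.sqrt ((d : ℝ) ^ 2 - 12 * ((g : ℝ) - 1)) ≥ 0 := by
  have hg₀ : (0 : ℝ) ≤ g := by exact_mod_cast (by omega : (0 : ℤ) ≤ g)
  have hgd : (g : ℝ) + 14 ≤ 2 * d := by exact_mod_cast (by omega : g + 14 ≤ 2 * d)
  have key : (15 * (g : ℝ) - 3 - d ^ 2) ^ 2 ≤ (d : ℝ) ^ 2 * (d ^ 2 - 12 * (g - 1)) := by
    linear_combination 3 * three_mul_sq_le_two_mul_sq_mul hg₀ hgd
  linarith [le_mul_sqrt_of_sq_le_sq_mul (by linarith : (0 : ℝ) ≤ d) key]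
end

section
/- Let g, s, d, m, n be integers with s ≥ −1, g ≥ 2s + 14, d = g − s, n ≥ 1, 3m² + dmn + (g − 1)n² > 0, 6m + nd ≥ 3, and md + (2n − 1)(g − 1) ≤ 0. Then −6m² + (1 − 2n)dm + (n − n²)(2g − 2) − 2 ≥ ⌊(g − 1)/2⌋. -/
/-!
Write `D = mH + nC`, so that the hypotheses read `D² > 0`, `D·H ≥ 3` and `D·C ≤ g - 1`, and the
left-hand side is `f = D·C - D² - 2`.

As a function of `m`, `D²/2 = 3m² + dmn + (g - 1)n²` is `n²(g + 11 - 2d) ≤ 0` at `m = -2n`, and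
its chord slope between `-2n` and `m` is `3(m - 2n) + dn = (6m + dn) - 3(m + 2n)`. If `m ≤ -2n`,
`D·H ≥ 3` makes this slope positive, so `D² ≤ 0`; hence `m ≥ -(2n - 1)`. Then the identity
`2f - (g - 2) = m²(2d - g - 14) + 2(m + 2n - 1)(g - 1 - D·C) + (g - 1)(m + 2n - 1)² + 3(m² - 1)`
shows `2f ≥ g - 2` as soon as `m ≠ 0`, and `f ≥ ⌊(g - 1)/2⌋` by integrality.
-/

theorem one_sub_two_mul_le_of_quadratic_pos {g d m n : ℤ} (hgd : g + 11 ≤ 2 * d)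
    (hD2 : 0 < 3 * m ^ 2 + d * m * n + (g - 1) * n ^ 2) (hDH : 3 ≤ 6 * m + n * d) :
    1 - 2 * n ≤ m := by
  by_contra! hm
  have hslope : 0 < 3 * m - 6 * n + d * n := by linarith
  have hchord : (m + 2 * n) * (3 * m - 6 * n + d * n) ≤ 0 :=
    mul_nonpos_of_nonpos_of_nonneg (by omega) hslope.le
  have hat_neg_two_mul : n ^ 2 * (g + 11 - 2 * d) ≤ 0 :=
    mul_nonpos_of_nonneg_of_nonpos (sq_nonneg n) (by omega)
  linarith

theorem sub_two_le_two_mul_clifford_index {g d m n : ℤ} (hg : 1 ≤ g) (hgd : g + 14 ≤ 2 * d)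
    (hm : m ≠ 0) (hm_low : 1 - 2 * n ≤ m) (hDC : m * d + (2 * n - 1) * (g - 1) ≤ 0) :
    g - 2 ≤ 2 * (-6 * m ^ 2 + (1 - 2 * n) * d * m + (n - n ^ 2) * (2 * g - 2) - 2) := by
  have hsum : 2 * (-6 * m ^ 2 + (1 - 2 * n) * d * m + (n - n ^ 2) * (2 * g - 2) - 2) - (g - 2) =
      m ^ 2 * (2 * d - (g + 14)) + 2 * (m + 2 * n - 1) * -(m * d + (2 * n - 1) * (g - 1)) +
        (g - 1) * (m + 2 * n - 1) ^ 2 + 3 * (m ^ 2 - 1) := by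
    ring
  have h₁ : 0 ≤ m ^ 2 * (2 * d - (g + 14)) := mul_nonneg (sq_nonneg m) (by omega)
  have h₂ : 0 ≤ 2 * (m + 2 * n - 1) * -(m * d + (2 * n - 1) * (g - 1)) :=
    mul_nonneg (by omega) (by omega)
  have h₃ : 0 ≤ (g - 1) * (m + 2 * n - 1) ^ 2 := mul_nonneg (by omega) (sq_nonneg _)
  have h₄ : 1 ≤ m ^ 2 := (one_le_sq_iff_one_le_abs m).2 (Int.one_le_abs hm)
  linarith

theorem stmt_16 (g s d m n : ℤ) (hs : s ≥ -1) (hg : g ≥ 2 * s + 14) (hd : d = g - s)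
    (hn : n ≥ 1)
    (h1 : 3 * m ^ 2 + d * m * n + (g - 1) * n ^ 2 > 0)
    (h2 : 6 * m + n * d ≥ 3)
    (h3 : m * d + (2 * n - 1) * (g - 1) ≤ 0) :
    -6 * m ^ 2 + (1 - 2 * n) * d * m + (n - n ^ 2) * (2 * g - 2) - 2 ≥ (g - 1) / 2 := by
  have hg12 : 12 ≤ g := by omega
  have hgd : g + 14 ≤ 2 * d := by omega
  have hm : m ≠ 0 := by
    rintro rfl
    nlinarith [mul_pos (by omega : 0 < 2 * n - 1) (by omega : 0 < g - 1)]
  have hm_low := one_sub_two_mul_le_of_quadratic_pos (by omega) h1 h2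
  have := sub_two_le_two_mul_clifford_index (by omega) hgd hm hm_low h3
  omega
end
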